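/- arXiv:2512.23695 — 2 statements merged into one kernel-verified Lean document; each statement's English description precedes it below -/
import Mathlib

section
/- Let a > 0, b ≥ 0 with a + 2b < 1, and set x* = (1 + √(1-8ab))/(2a). Then (c₁, c₂) = (x*, x*) satisfies a·min(c₁,c₂) + b·(1/c₁ + 1/c₂) ≥ 1 and min(c₁,c₂) ≥ 1, and c₁ + c₂ = 2x* is the minimal value of c₁ + c₂ over all c₁, c₂ > 0 satisfying these two constraints. -/
set_option maxHeartbeats 1000000 in
theorem stmt_12 (a b : ℝ) (ha : 0 < a) (hb : 0 ≤ b) (h : a + 2 * b < 1) :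
    let x := (1 + Real.sqrt (1 - 8 * a * b)) / (2 * a)
    (a * min x x + b * (1 / x + 1 / x) ≥ 1 ∧ min x x ≥ 1) ∧
      IsLeast {y : ℝ | ∃ c₁ c₂ : ℝ, 0 < c₁ ∧ 0 < c₂ ∧
        a * min c₁ c₂ + b * (1 / c₁ + 1 / c₂) ≥ 1 ∧ min c₁ c₂ ≥ 1 ∧
        y = c₁ + c₂} (2 * x) := by
  intro x
  have hxdef : x = (1 + Real.sqrt (1 - 8 * a * b)) / (2 * a) := rfl
  set s := Real.sqrt (1 - 8 * a * b) with hsdef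
  have h8 : 0 ≤ 1 - 8 * a * b := by nlinarith [sq_nonneg (a - 2 * b), sq_nonneg (a + 2 * b)]
  have hs2 : s ^ 2 = 1 - 8 * a * b := Real.sq_sqrt h8
  have hs0 : 0 ≤ s := Real.sqrt_nonneg _
  have hsgt : (2 * a - 1) ^ 2 < s ^ 2 := by nlinarith
  have hsa : 2 * a - 1 < s := by nlinarith
  have hsb : 1 - 2 * a < s := by nlinarith
  have h2a : (0:ℝ) < 2 * a := by linarith
  have hx1 : 1 ≤ x := by
    rw [hxdef, le_div_iff₀ h2a]; linarith
  have hxpos : 0 < x := lt_of_lt_of_le one_pos hx1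
  have hxq : a * x ^ 2 - x + 2 * b = 0 := by
    rw [hxdef]; field_simp; nlinarith
  have hfeas : a * min x x + b * (1 / x + 1 / x) ≥ 1 ∧ min x x ≥ 1 := by
    constructor
    · rw [min_self]
      have : a * x + b * (1 / x + 1 / x) = 1 := by
        field_simp
        nlinarith
      linarith
    · rw [min_self]; exact hx1
  refine ⟨hfeas, ?_, ?_⟩
  · exact ⟨x, x, hxpos, hxpos, hfeas.1, hfeas.2, by ring⟩
  · rintro y ⟨c₁, c₂, hc1, hc2, hcon, hmin, hy⟩
    set m := min c₁ c₂ with hm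
    have hm1 : 1 ≤ m := hmin
    have hm0 : 0 < m := lt_of_lt_of_le one_pos hm1
    have hmc1 : m ≤ c₁ := min_le_left _ _
    have hmc2 : m ≤ c₂ := min_le_right _ _
    have hi1 : 1 / c₁ ≤ 1 / m := one_div_le_one_div_of_le hm0 hmc1
    have hi2 : 1 / c₂ ≤ 1 / m := one_div_le_one_div_of_le hm0 hmc2
    have hcon' : a * m + 2 * b / m ≥ 1 := by
      have : b * (1 / c₁ + 1 / c₂) ≤ b * (1 / m + 1 / m) := by
        apply mul_le_mul_of_nonneg_left (by linarith) hb
      have h2 : a * m + b * (1 / m + 1 / m) ≥ 1 := by linarith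
      have : b * (1 / m + 1 / m) = 2 * b / m := by ring
      linarith
    have hquad : 0 ≤ a * m ^ 2 - m + 2 * b := by
      have := mul_le_mul_of_nonneg_right hcon' hm0.le
      -- (a*m + 2*b/m) * m ≥ m
      have hmm : (a * m + 2 * b / m) * m = a * m ^ 2 + 2 * b := by
        field_simp
      nlinarith
    have hmx : x ≤ m := by
      by_contra hlt
      push_neg at hlt
      have h1 : 0 < 2 * a * m - (1 - s) := by
        have := mul_le_mul_of_nonneg_left hm1 h2a.le
        linarith
      have h2 : 0 < (1 + s) - 2 * a * m := by
        have : m < (1 + s) / (2 * a) := hlt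
        rw [lt_div_iff₀ h2a] at this
        linarith
      nlinarith [mul_pos h1 h2, mul_nonneg ha.le hquad, hs2]
    have : 2 * x ≤ c₁ + c₂ := by linarith
    linarith [hy ▸ this]
end

section
/- For every a > 0, b ≥ 0 with a + 2b < 1: (1 + √(1-4ab)) < 2(1 + √(1-8ab)) ; consequently the parallel configuration strictly outperforms the serial one in region A. -/
theorem stmt_15 (a b : ℝ) (ha : 0 < a) (hb : 0 ≤ b) (h : a + 2 * b < 1) :
    1 + Real.sqrt (1 - 4 * a * b) < 2 * (1 + Real.sqrt (1 - 8 * a * b)) := by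
  have h1 : Real.sqrt (1 - 4 * a * b) ≤ 1 := Real.sqrt_le_one.mpr (by nlinarith)
  have h2 : 0 < Real.sqrt (1 - 8 * a * b) :=
    Real.sqrt_pos.mpr (by nlinarith [sq_nonneg (a - 2 * b), sq_nonneg (a + 2 * b)])
  linarith
end
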